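/- arXiv:1901.07162 — 2 statements merged into one kernel-verified Lean document; each statement's English description precedes it below -/
import Mathlib

section
/- Suppose m = 2, d = 1 (so e = 4, s = 2) and a^{(q-1)/(p+1)} = 1. Then the defining set D_0 has size p^2 - 1, the set of distinct codewords {c_b : b ∈ F_q} has exactly p^2 elements, each codeword arises from exactly p^2 values of b ∈ F_q, and every nonzero codeword c_b has Hamming weight exactly (p-1)·p; in particular the code C_{D_0} is a [p^2 - 1, 2, (p-1)p] one-weight linear code over F_p. -/
/-!
Let `σ` be the Frobenius power `x ↦ x ^ p ^ k`. As `gcd k 4 = 1`, it generates `Gal(F/𝔽_p)` and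
`σ²` is `x ↦ x ^ p ^ 2`. The hypothesis on `a` says that `a * σ² a = a ^ (p ^ 2 + 1)` lies in `𝔽_p`,
which makes `φ x = (σ a / a) * σ² x` (`twistedSquare σ a`) an `𝔽_p`-linear involution of `F`, so
`F = E₊ ⊕ E₋` with `E_± = ker (φ ∓ 1)`. Multiplication by any `c ≠ 0` with `σ² c = -c` swaps `E₊`
and `E₋`, so both are planes. For `x ∈ E_±` the element `v = a * σ x * x` satisfies `σ v = ± v`.
Hence `Q x = Tr (a * x ^ (p ^ k + 1)) = Tr v` vanishes on `E₋`, while on `E₊ \ {0}` we get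
`v ∈ 𝔽_p^*` and `Q x = 4 v ≠ 0`. The cross terms of `Q` between `E₋` and `F` cancel, so the zero
set of `Q` is exactly `E₋` and `D₀ = E₋ \ {0}`. What remains is the trace code of a plane: as the
trace form is nondegenerate, its codewords are exactly the linear forms on `E₋`, each arising from
a coset of the `2`-dimensional orthogonal of `E₋`, and a nonzero form vanishes on a line, that is,
on `p` points.
-/

open Module Finset

namespace Module.End

variable {K V : Type*} [Field K] [AddCommGroup V] [Module K V]

theorem isCompl_eigenspace_one_neg_one {φ : End K V} (hφ : ∀ x, φ (φ x) = x)
    (h2 : (2 : K) ≠ 0) : IsCompl (φ.eigenspace 1) (φ.eigenspace (-1)) := by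
  refine ⟨Submodule.disjoint_def.mpr fun x hx hx' => ?_, codisjoint_iff.mpr ?_⟩
  · rw [mem_eigenspace_iff] at hx hx'
    have : (2 : K) • x = 0 := by
      rw [two_smul]
      nth_rw 1 [← one_smul K x]
      rw [← hx, hx', neg_one_smul, neg_add_cancel]
    exact (smul_eq_zero.mp this).resolve_left h2
  · refine eq_top_iff.mpr fun x _ => Submodule.mem_sup.mpr
      ⟨(2 : K)⁻¹ • (x + φ x), ?_, (2 : K)⁻¹ • (x - φ x), ?_, ?_⟩
    · rw [mem_eigenspace_iff, map_smul, map_add, hφ, add_comm, one_smul]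
    · rw [mem_eigenspace_iff, map_smul, map_sub, hφ, neg_one_smul, ← smul_neg, neg_sub]
    · rw [← smul_add, add_add_sub_cancel, ← two_smul K, smul_smul, inv_mul_cancel₀ h2, one_smul]

theorem finrank_eigenspace_le_of_anticomm [FiniteDimensional K V] {φ g : End K V}
    (hg : Function.Injective g) (hφg : ∀ x, φ (g x) = -g (φ x)) (μ : K) :
    finrank K (φ.eigenspace μ) ≤ finrank K (φ.eigenspace (-μ)) := by
  have hmap : (φ.eigenspace μ).map g ≤ φ.eigenspace (-μ) := by
    rintro _ ⟨x, hx, rfl⟩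
    rw [SetLike.mem_coe, mem_eigenspace_iff] at hx
    rw [mem_eigenspace_iff, hφg, hx, map_smul, neg_smul]
  calc finrank K (φ.eigenspace μ) = finrank K ((φ.eigenspace μ).map g) :=
        (Submodule.equivMapOfInjective g hg _).finrank_eq
    _ ≤ _ := Submodule.finrank_mono hmap

end Module.End

theorem AlgEquiv.apply_eq_self_of_mem_zpowers {L F : Type*} [Field L] [Field F] [Algebra L F]
    {σ g : F ≃ₐ[L] F} (hg : g ∈ Subgroup.zpowers σ) {v : F} (hv : σ v = v) : g v = v :=
  Subgroup.zpowers_le.mpr (show σ ∈ MulAction.stabilizer _ v from hv) hg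

section TwistedSquare

variable {L F : Type*} [Field L] [Field F] [Algebra L F] (σ : Gal(F/L)) (a : F)

noncomputable def twistedSquare : End L F :=
  LinearMap.mulLeft L (a⁻¹ * σ a) ∘ₗ (σ * σ).toLinearMap

theorem twistedSquare_apply (x : F) : twistedSquare σ a x = a⁻¹ * σ a * σ (σ x) := rfl

variable {σ a}

theorem mem_eigenspace_twistedSquare_iff (ha : a ≠ 0) (μ : L) (x : F) :
    x ∈ (twistedSquare σ a).eigenspace μ ↔ σ a * σ (σ x) = μ • (a * x) := by
  rw [End.mem_eigenspace_iff, twistedSquare_apply, mul_assoc, ← mul_smul_comm,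
    inv_mul_eq_iff_eq_mul₀ ha]

theorem twistedSquare_twistedSquare (hσ4 : σ ^ 4 = 1) (ha : a ≠ 0)
    (hN : σ (a * σ (σ a)) = a * σ (σ a)) (x : F) :
    twistedSquare σ a (twistedSquare σ a x) = x := by
  have hσ4x (y : F) : σ (σ (σ (σ y))) = y := by
    simpa [pow_succ, AlgEquiv.mul_apply] using DFunLike.congr_fun hσ4 y
  have hσσa : σ (σ a) ≠ 0 := by simpa using ha
  simp only [twistedSquare_apply, map_mul, map_inv₀, hσ4x]
  rw [map_mul] at hN
  field_simp
  linear_combination x * hN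

theorem trace_eq_zero_of_apply_eq_neg (h2 : (2 : L) ≠ 0) {v : F} (hv : σ v = -v) :
    Algebra.trace L F v = 0 := by
  have h := Algebra.trace_eq_of_algEquiv σ v
  rw [hv, map_neg, neg_eq_iff_add_eq_zero, ← two_mul] at h
  exact (mul_eq_zero.mp h).resolve_left h2

theorem trace_mul_apply_mul_eq_zero_of_mem (ha : a ≠ 0) (h2 : (2 : L) ≠ 0) {x : F}
    (hx : x ∈ (twistedSquare σ a).eigenspace (-1)) : Algebra.trace L F (a * σ x * x) = 0 := by
  rw [mem_eigenspace_twistedSquare_iff ha, neg_one_smul] at hx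
  refine trace_eq_zero_of_apply_eq_neg (σ := σ) h2 ?_
  rw [map_mul, map_mul, hx]
  ring

theorem trace_mul_apply_mul_ne_zero (ha : a ≠ 0) (hdeg : (finrank L F : L) ≠ 0)
    (hfix : ∀ v, σ v = v → v ∈ Set.range (algebraMap L F)) {x : F}
    (hx : x ∈ (twistedSquare σ a).eigenspace 1) (hx0 : x ≠ 0) :
    Algebra.trace L F (a * σ x * x) ≠ 0 := by
  rw [mem_eigenspace_twistedSquare_iff ha, one_smul] at hx
  have hv0 : a * σ x * x ≠ 0 := by simp [ha, hx0]
  obtain ⟨c, hc⟩ := hfix (a * σ x * x) (by rw [map_mul, map_mul, hx]; ring)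
  rw [← hc, Algebra.trace_algebraMap, nsmul_eq_mul]
  refine mul_ne_zero hdeg fun hc0 => hv0 ?_
  rw [← hc, hc0, map_zero]

theorem trace_mul_apply_mul_add (ha : a ≠ 0) {z : F}
    (hz : z ∈ (twistedSquare σ a).eigenspace (-1)) (y : F) :
    Algebra.trace L F (a * σ (z + y) * (z + y)) =
      Algebra.trace L F (a * σ z * z) + Algebra.trace L F (a * σ y * y) := by
  rw [mem_eigenspace_twistedSquare_iff ha, neg_one_smul] at hz
  -- applying `σ` inside the trace turns one cross term into minus the other
  have hcross : Algebra.trace L F (a * σ z * y) = -Algebra.trace L F (a * σ y * z) := by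
    rw [← Algebra.trace_eq_of_algEquiv σ, map_mul σ, map_mul σ, hz, ← map_neg]
    congr 1
    ring
  have hexp : a * σ (z + y) * (z + y) =
      a * σ z * z + a * σ y * y + (a * σ z * y + a * σ y * z) := by
    rw [map_add]
    ring
  rw [hexp, map_add, map_add, map_add, hcross, neg_add_cancel, add_zero]

end TwistedSquare

section CyclicQuartic

variable {L F : Type*} [Field L] [Field F] [Algebra L F] [FiniteDimensional L F] [IsGalois L F]
  {σ : Gal(F/L)} {a : F}

theorem mem_range_algebraMap_of_apply_eq (hσ : ∀ g, g ∈ Subgroup.zpowers σ) {v : F}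
    (hv : σ v = v) : v ∈ Set.range (algebraMap L F) :=
  (IsGalois.mem_range_algebraMap_iff_fixed v).mpr fun g =>
    AlgEquiv.apply_eq_self_of_mem_zpowers (hσ g) hv

theorem orderOf_eq_finrank_of_forall_mem_zpowers (hσ : ∀ g, g ∈ Subgroup.zpowers σ) :
    orderOf σ = finrank L F := by
  rw [orderOf_eq_card_of_forall_mem_zpowers hσ, IsGalois.card_aut_eq_finrank]

theorem trace_mul_apply_mul_eq_zero_iff (hσ : ∀ g, g ∈ Subgroup.zpowers σ)
    (hdeg : finrank L F = 4) (h2 : (2 : L) ≠ 0) (ha : a ≠ 0)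
    (hN : σ (a * σ (σ a)) = a * σ (σ a)) (x : F) :
    Algebra.trace L F (a * σ x * x) = 0 ↔ x ∈ (twistedSquare σ a).eigenspace (-1) := by
  have hσ4 : σ ^ 4 = 1 := hdeg ▸ orderOf_eq_finrank_of_forall_mem_zpowers hσ ▸ pow_orderOf_eq_one σ
  have hdeg' : (finrank L F : L) ≠ 0 := by
    rw [hdeg, show ((4 : ℕ) : L) = 2 * 2 by norm_num]
    exact mul_ne_zero h2 h2
  have hcompl := End.isCompl_eigenspace_one_neg_one (twistedSquare_twistedSquare hσ4 ha hN) h2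
  obtain ⟨y, hy, z, hz, rfl⟩ :=
    Submodule.mem_sup.mp (hcompl.codisjoint.eq_top ▸ Submodule.mem_top (x := x))
  rw [add_comm y z, trace_mul_apply_mul_add ha hz, trace_mul_apply_mul_eq_zero_of_mem ha h2 hz,
    zero_add]
  have hQy : Algebra.trace L F (a * σ y * y) = 0 ↔ y = 0 :=
    ⟨not_imp_not.mp <| trace_mul_apply_mul_ne_zero ha hdeg'
        (fun _ => mem_range_algebraMap_of_apply_eq hσ) hy,
      by rintro rfl; simp⟩
  have hmem : z + y ∈ (twistedSquare σ a).eigenspace (-1) ↔ y = 0 :=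
    ⟨fun h => Submodule.disjoint_def.mp hcompl.disjoint y hy (by simpa using sub_mem h hz),
      by rintro rfl; simpa using hz⟩
  rw [hQy, hmem]

theorem finrank_eigenspace_neg_one_twistedSquare (hσ : ∀ g, g ∈ Subgroup.zpowers σ)
    (hdeg : finrank L F = 4) (h2 : (2 : L) ≠ 0) (ha : a ≠ 0)
    (hN : σ (a * σ (σ a)) = a * σ (σ a)) :
    finrank L ((twistedSquare σ a).eigenspace (-1)) = 2 := by
  have hord := (orderOf_eq_finrank_of_forall_mem_zpowers hσ).trans hdeg
  have hσ4 : σ ^ 4 = 1 := hord ▸ pow_orderOf_eq_one σ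
  have hσ4x (y : F) : σ (σ (σ (σ y))) = y := by
    simpa [pow_succ, AlgEquiv.mul_apply] using DFunLike.congr_fun hσ4 y
  obtain ⟨w, hw⟩ : ∃ w, σ (σ w) ≠ w := by
    by_contra! h
    refine pow_ne_one_of_lt_orderOf two_ne_zero (by rw [hord]; norm_num) ?_
    ext y
    simp [pow_two, h]
  set c := w - σ (σ w)
  have hc0 : c ≠ 0 := sub_ne_zero.mpr (Ne.symm hw)
  have hcσ : σ (σ c) = -c := by simp only [c, map_sub, hσ4x, neg_sub]
  have hφc (x : F) : twistedSquare σ a (LinearMap.mulLeft L c x) =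
      -LinearMap.mulLeft L c (twistedSquare σ a x) := by
    simp only [LinearMap.mulLeft_apply, twistedSquare_apply, map_mul, hcσ]
    ring
  have hinj : Function.Injective (LinearMap.mulLeft L c) := mul_right_injective₀ hc0
  have hle := End.finrank_eigenspace_le_of_anticomm hinj hφc 1
  have hle' := End.finrank_eigenspace_le_of_anticomm hinj hφc (-1)
  rw [neg_neg] at hle'
  have hsum := Submodule.finrank_add_eq_of_isCompl
    (End.isCompl_eigenspace_one_neg_one (twistedSquare_twistedSquare hσ4 ha hN) h2)
  omega

end CyclicQuartic

theorem Module.card_dual_apply_ne_zero {L V : Type*} [Field L] [Fintype L] [DecidableEq L]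
    [AddCommGroup V] [Module L V] [Fintype V] {f : Dual L V} (hf : f ≠ 0) :
    Fintype.card {x // f x ≠ 0} =
      Fintype.card L ^ finrank L V - Fintype.card L ^ (finrank L V - 1) := by
  have hker := f.finrank_ker_add_one_of_ne_zero hf
  have hcard : Nat.card (LinearMap.ker f) = Nat.card L ^ (finrank L V - 1) := by
    rw [natCard_eq_pow_finrank (K := L), ← hker, Nat.add_sub_cancel]
  rw [Fintype.card_subtype_compl, card_eq_pow_finrank (K := L) (V := V),
    ← Nat.card_eq_fintype_card, ← Nat.card_eq_fintype_card, ← hcard]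
  rfl

section TraceCode

variable {L F : Type*} [Field L] [Field F] [Algebra L F] {ι : Type*}

noncomputable def traceCode (v : ι → F) : F →ₗ[L] ι → L :=
  LinearMap.pi fun i => (Algebra.traceForm L F).flip (v i)

theorem traceCode_apply (v : ι → F) (b : F) (i : ι) :
    traceCode (L := L) v b i = Algebra.trace L F (b * v i) := rfl

theorem ker_traceCode (v : ι → F) :
    LinearMap.ker (traceCode (L := L) v) =
      (Algebra.traceForm L F).orthogonal (Submodule.span L (Set.range v)) := by
  ext b
  change _ ↔ Submodule.span L (Set.range v) ≤ LinearMap.ker ((Algebra.traceForm L F).flip b)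
  simp [Submodule.span_le, Set.range_subset_iff, funext_iff, traceCode_apply, mul_comm]

theorem span_range_val_of_mem_iff {W : Submodule L F} {D : Finset F}
    (hD : ∀ x, x ∈ D ↔ x ≠ 0 ∧ x ∈ W) :
    Submodule.span L (Set.range (Subtype.val : D → F)) = W := by
  have : Set.range (Subtype.val : D → F) = (W : Set F) \ {0} := by ext x; simp [hD, and_comm]
  rw [this, Submodule.span_sdiff_singleton_zero, Submodule.span_eq]

variable [FiniteDimensional L F] [Algebra.IsSeparable L F]

theorem finrank_ker_traceCode (v : ι → F) :
    finrank L (LinearMap.ker (traceCode (L := L) v)) =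
      finrank L F - finrank L (Submodule.span L (Set.range v)) := by
  rw [ker_traceCode, LinearMap.BilinForm.finrank_orthogonal (traceForm_nondegenerate L F)]

theorem finrank_range_traceCode [Finite ι] (v : ι → F) :
    finrank L (LinearMap.range (traceCode (L := L) v)) =
      finrank L (Submodule.span L (Set.range v)) := by
  have hrank := LinearMap.finrank_range_add_finrank_ker (traceCode (L := L) v)
  have hle := Submodule.finrank_le (Submodule.span L (Set.range v))
  rw [finrank_ker_traceCode] at hrank
  omega

end TraceCode

section DefiningSet

variable {L F : Type*} [Field L] [Fintype L] [Field F] [Fintype F] [Algebra L F]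
  {W : Submodule L F} {D : Finset F}

theorem card_eq_pow_finrank_sub_one_of_mem_iff [DecidableEq F]
    (hD : ∀ x, x ∈ D ↔ x ≠ 0 ∧ x ∈ W) : #D = Fintype.card L ^ finrank L W - 1 := by
  classical
  have : D = ({x | x ∈ W} : Finset F).erase 0 := by ext x; simp [hD]
  rw [this, card_erase_of_mem (by simp), ← Fintype.card_subtype, card_eq_pow_finrank (K := L)]

theorem card_image_trace_mul_of_mem_iff [DecidableEq L] (hD : ∀ x, x ∈ D ↔ x ≠ 0 ∧ x ∈ W) :
    #(univ.image fun b : F => fun x : D => Algebra.trace L F (b * x)) =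
      Fintype.card L ^ finrank L W := by
  rw [← Set.toFinset_range, Set.toFinset_card, ← Nat.card_eq_fintype_card]
  change Nat.card (LinearMap.range (traceCode (L := L) (Subtype.val : D → F))) = _
  rw [natCard_eq_pow_finrank (K := L), finrank_range_traceCode, span_range_val_of_mem_iff hD,
    Nat.card_eq_fintype_card]

theorem card_filter_trace_mul_eq_of_mem_iff [DecidableEq L] (hD : ∀ x, x ∈ D ↔ x ≠ 0 ∧ x ∈ W)
    (b : F) :
    #{b' | ∀ x ∈ D, Algebra.trace L F (b' * x) = Algebra.trace L F (b * x)} =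
      Fintype.card L ^ (finrank L F - finrank L W) := by
  set c := traceCode (L := L) (Subtype.val : D → F)
  have hfiber (b' : F) :
      (∀ x ∈ D, Algebra.trace L F (b' * x) = Algebra.trace L F (b * x)) ↔ c b' = c b := by
    simp [c, funext_iff, traceCode_apply]
  rw [filter_congr fun b' _ => hfiber b',
    AddMonoidHom.card_fiber_eq_of_mem_range c ⟨b, rfl⟩ ⟨0, rfl⟩, map_zero,
    ← Fintype.card_subtype, ← Nat.card_eq_fintype_card]
  change Nat.card (LinearMap.ker c) = _
  rw [natCard_eq_pow_finrank (K := L), finrank_ker_traceCode, span_range_val_of_mem_iff hD,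
    Nat.card_eq_fintype_card]

theorem card_filter_trace_mul_ne_zero_of_mem_iff [DecidableEq L]
    (hD : ∀ x, x ∈ D ↔ x ≠ 0 ∧ x ∈ W) {b : F} (hb : ∃ x ∈ D, Algebra.trace L F (b * x) ≠ 0) :
    #{x ∈ D | Algebra.trace L F (b * x) ≠ 0} =
      Fintype.card L ^ finrank L W - Fintype.card L ^ (finrank L W - 1) := by
  classical
  set f : Dual L W := Algebra.traceForm L F b ∘ₗ W.subtype
  have hf : f ≠ 0 := by
    obtain ⟨x, hxD, hx⟩ := hb
    exact fun h => hx (LinearMap.congr_fun h ⟨x, ((hD x).mp hxD).2⟩)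
  have hfilter : {x ∈ D | Algebra.trace L F (b * x) ≠ 0} =
      ({x | x ∈ W ∧ Algebra.trace L F (b * x) ≠ 0} : Finset F) := by
    ext x
    simp only [mem_filter, mem_univ, true_and, hD]
    refine ⟨fun ⟨⟨_, hW⟩, h⟩ => ⟨hW, h⟩, fun ⟨hW, h⟩ => ⟨⟨?_, hW⟩, h⟩⟩
    rintro rfl
    simp at h
  rw [hfilter, ← Fintype.card_subtype, ← Module.card_dual_apply_ne_zero hf]
  exact Fintype.card_congr (Equiv.subtypeSubtypeEquivSubtypeInter (· ∈ W) _).symm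

end DefiningSet

namespace FiniteField

variable {K L : Type*} [Field K] [Fintype K] [Field L] [Algebra K L]

theorem finrank_zmod_eq_of_card_eq_pow {p n : ℕ} [Fact p.Prime] [Fintype L] [Algebra (ZMod p) L]
    (hL : Fintype.card L = p ^ n) : finrank (ZMod p) L = n :=
  Nat.pow_right_injective (Fact.out : p.Prime).two_le ((pow_finrank_eq_card p L).trans hL)

theorem frobeniusAlgEquivOfAlgebraic_pow_apply [Algebra.IsAlgebraic K L] (n : ℕ) (x : L) :
    (frobeniusAlgEquivOfAlgebraic K L ^ n) x = x ^ Fintype.card K ^ n := by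
  rw [AlgEquiv.coe_pow, coe_frobeniusAlgEquivOfAlgebraic_iterate]

theorem mem_zpowers_frobeniusAlgEquivOfAlgebraic_pow [Finite L] {k : ℕ}
    (hk : Nat.Coprime (finrank K L) k) (g : Gal(L/K)) :
    g ∈ Subgroup.zpowers (frobeniusAlgEquivOfAlgebraic K L ^ k) := by
  have hord : orderOf (frobeniusAlgEquivOfAlgebraic K L ^ k) = Nat.card Gal(L/K) := by
    rw [orderOf_pow, orderOf_frobeniusAlgEquivOfAlgebraic, IsGalois.card_aut_eq_finrank, hk,
      Nat.div_one]
  rw [Subgroup.eq_top_of_card_eq _ ((Nat.card_zpowers _).trans hord)]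
  exact Subgroup.mem_top g

end FiniteField

theorem exists_finrank_eq_two_and_trace_eq_zero_iff {p : ℕ} [Fact p.Prime] {F : Type*} [Field F]
    [Fintype F] [Algebra (ZMod p) F] (hp2 : p ≠ 2) (hF : Fintype.card F = p ^ 4) {k : ℕ}
    (hk : Nat.Coprime k 4) {a : F} (ha : a ≠ 0) (hcase : a ^ ((p ^ 4 - 1) / (p + 1)) = 1) :
    ∃ W : Submodule (ZMod p) F, finrank (ZMod p) W = 2 ∧
      ∀ x, Algebra.trace (ZMod p) F (a * x ^ (p ^ k + 1)) = 0 ↔ x ∈ W := by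
  have hp := (Fact.out : p.Prime)
  have hdeg := FiniteField.finrank_zmod_eq_of_card_eq_pow hF
  set φ := FiniteField.frobeniusAlgEquivOfAlgebraic (ZMod p) F
  have hφ (n : ℕ) (x : F) : (φ ^ n) x = x ^ p ^ n := by
    rw [FiniteField.frobeniusAlgEquivOfAlgebraic_pow_apply, ZMod.card]
  set σ := φ ^ k
  have hσ := FiniteField.mem_zpowers_frobeniusAlgEquivOfAlgebraic_pow (hdeg ▸ hk.symm)
  have hσσ (x : F) : σ (σ x) = x ^ p ^ 2 := by
    have hk2 : k % 2 = 1 := Nat.odd_iff.mp (hk.coprime_dvd_right (by norm_num)).odd_of_right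
    have : σ * σ = φ ^ 2 := by
      rw [← pow_add, pow_eq_pow_iff_modEq, FiniteField.orderOf_frobeniusAlgEquivOfAlgebraic,
        hdeg, Nat.ModEq]
      omega
    rw [← AlgEquiv.mul_apply, this, hφ]
  have hN : σ (a * σ (σ a)) = a * σ (σ a) := by
    have hexp : (p ^ 4 - 1) / (p + 1) + (p ^ 2 + 1) = (p ^ 2 + 1) * p := by
      have hdiv : (p ^ 4 - 1) / (p + 1) = (p - 1) * (p ^ 2 + 1) :=
        Nat.div_eq_of_eq_mul_left (by omega) (by zify [hp.one_le, Nat.one_le_pow 4 p hp.pos]; ring)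
      rw [hdiv]
      zify [hp.one_le]
      ring
    have hfrob : φ (a * σ (σ a)) = a * σ (σ a) := by
      rw [← pow_one φ, hφ, pow_one, hσσ, ← pow_succ', ← pow_mul, ← hexp, pow_add, hcase, one_mul]
    exact AlgEquiv.apply_eq_self_of_mem_zpowers (Subgroup.pow_mem _ (Subgroup.mem_zpowers φ) k)
      hfrob
  have h2 : (2 : ZMod p) ≠ 0 := Ring.two_ne_zero (by rwa [ZMod.ringChar_zmod_n])
  refine ⟨_, finrank_eigenspace_neg_one_twistedSquare hσ hdeg h2 ha hN, fun x => ?_⟩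
  rw [pow_succ, ← hφ, ← mul_assoc]
  exact trace_mul_apply_mul_eq_zero_iff hσ hdeg h2 ha hN x

theorem stmt_4_general
    (p e k d m : ℕ) [Fact p.Prime] (hp2 : p ≠ 2)
    (hd : d = Nat.gcd k e)
    (hem : e = 2 * m) (hm : m = 2) (hd1 : d = 1)
    (F : Type*) [Field F] [Fintype F] [DecidableEq F] [Algebra (ZMod p) F]
    (hcard : Fintype.card F = p ^ e)
    (a : F) (ha : a ≠ 0)
    (hcase : a ^ ((p ^ e - 1) / (p ^ d + 1)) = 1) :
    let Tr : F → ZMod p := fun x => Algebra.trace (ZMod p) F x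
    let D0 : Finset F :=
      Finset.univ.filter (fun x => x ≠ 0 ∧ Tr (a * x ^ (p ^ k + 1)) = 0)
    let wt : F → ℕ := fun b => (D0.filter (fun x => Tr (b * x) ≠ 0)).card
    -- length
    (D0.card = p ^ 2 - 1)
    -- the set of distinct codewords has exactly p^2 elements
    ∧ (Finset.univ.image (fun b : F => fun x : {x : F // x ∈ D0} => Tr (b * x.1))).card = p ^ 2
    -- each codeword arises from exactly p^2 values of b
    ∧ (∀ b : F,
        (Finset.univ.filter (fun b' : F => ∀ x ∈ D0, Tr (b' * x) = Tr (b * x))).card = p ^ 2)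
    -- every nonzero codeword has Hamming weight (p-1)·p
    ∧ (∀ b : F, (∃ x ∈ D0, Tr (b * x) ≠ 0) → wt b = (p - 1) * p) := by
  intro Tr D0 wt
  subst hm hem hd1
  obtain ⟨W, hW, hzero⟩ := exists_finrank_eq_two_and_trace_eq_zero_iff hp2 hcard
    (hd.symm : Nat.Coprime k 4) ha (by simpa using hcase)
  have hD0 (x : F) : x ∈ D0 ↔ x ≠ 0 ∧ x ∈ W := by simp [D0, Tr, hzero]
  refine ⟨?_, ?_, fun b => ?_, fun b hb => ?_⟩
  · rw [card_eq_pow_finrank_sub_one_of_mem_iff hD0, hW, ZMod.card]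
  · rw [card_image_trace_mul_of_mem_iff hD0, hW, ZMod.card]
  · -- `convert` reconciles the filter's decidability instance with the one in the lemma
    convert card_filter_trace_mul_eq_of_mem_iff hD0 b using 3
    · rw [ZMod.card]
    · rw [FiniteField.finrank_zmod_eq_of_card_eq_pow hcard, hW]
  · exact (card_filter_trace_mul_ne_zero_of_mem_iff hD0 hb).trans
      (by rw [hW, ZMod.card, Nat.sub_one_mul, pow_two, pow_one])

/-- Corollary 1: for `m = 2`, `d = 1` (so `e = 4`, `s = 2`) and `a^((q-1)/(p+1)) = 1`,
the code `C_{D_0}` is a `[p^2 - 1, 2, (p-1)p]` one-weight linear code, each codeword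
arising from exactly `p^2` values of `b`. -/
theorem stmt_4
    (p e k d m s : ℕ) [Fact p.Prime] (hp2 : p ≠ 2)
    (hk : 0 < k) (he : 0 < e)
    (hd : d = Nat.gcd k e) (heven : Even (e / d))
    (hem : e = 2 * m) (hsd : s = m / d) (hm : m = 2) (hd1 : d = 1)
    (F : Type*) [Field F] [Fintype F] [DecidableEq F] [Algebra (ZMod p) F]
    (hcard : Fintype.card F = p ^ e)
    (a : F) (ha : a ≠ 0)
    (hcase : a ^ ((p ^ e - 1) / (p ^ d + 1)) = 1) :
    let Tr : F → ZMod p := fun x => Algebra.trace (ZMod p) F x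
    let D0 : Finset F :=
      Finset.univ.filter (fun x => x ≠ 0 ∧ Tr (a * x ^ (p ^ k + 1)) = 0)
    let wt : F → ℕ := fun b => (D0.filter (fun x => Tr (b * x) ≠ 0)).card
    -- length
    (D0.card = p ^ 2 - 1)
    -- the set of distinct codewords has exactly p^2 elements
    ∧ (Finset.univ.image (fun b : F => fun x : {x : F // x ∈ D0} => Tr (b * x.1))).card = p ^ 2
    -- each codeword arises from exactly p^2 values of b
    ∧ (∀ b : F,
        (Finset.univ.filter (fun b' : F => ∀ x ∈ D0, Tr (b' * x) = Tr (b * x))).card = p ^ 2)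
    -- every nonzero codeword has Hamming weight (p-1)·p
    ∧ (∀ b : F, (∃ x ∈ D0, Tr (b * x) ≠ 0) → wt b = (p - 1) * p) :=
  stmt_4_general p e k d m hp2 hd hem hm hd1 F hcard a ha hcase
end

section
/- Suppose m = d (so s = 1 and e = 2d) and a^{(q-1)/(p^d+1)} = -1. Then the defining set D_0 equals all of F_q^*, so it has size p^e - 1, the map b ↦ c_b is injective, and every codeword c_b with b ∈ F_q^* has Hamming weight exactly (p-1)·p^{e-1}; in particular the code C_{D_0} is a [p^e - 1, e, (p-1)p^{e-1}] one-weight linear code over F_p. -/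
section aux
variable (p : ℕ) [Fact p.Prime] (F : Type*) [Field F] [Fintype F] [DecidableEq F]
  [Algebra (ZMod p) F]

/-- Frobenius invariance of the trace to `ZMod p`. -/
lemma my_trace_frob (x : F) :
    Algebra.trace (ZMod p) F (x ^ p) = Algebra.trace (ZMod p) F x := by
  haveI : CharP F p := charP_of_injective_algebraMap (algebraMap (ZMod p) F).injective p
  let fa : F →ₐ[ZMod p] F :=
    { toRingHom := frobenius F p
      commutes' := fun c => by
        show (algebraMap (ZMod p) F c) ^ p = algebraMap (ZMod p) F c
        rw [← map_pow, ZMod.pow_card] }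
  have hbij : Function.Bijective fa :=
    Finite.injective_iff_bijective.mp fa.toRingHom.injective
  have := Algebra.trace_eq_of_algEquiv (AlgEquiv.ofBijective fa hbij) x
  simpa [AlgEquiv.ofBijective, fa, frobenius_def] using this

lemma my_trace_frob_pow (n : ℕ) (x : F) :
    Algebra.trace (ZMod p) F (x ^ p ^ n) = Algebra.trace (ZMod p) F x := by
  induction n generalizing x with
  | zero => simp
  | succ n ih => rw [pow_succ, pow_mul, my_trace_frob, ih]

end aux

/-- Corollary 2: for `m = d` (so `s = 1`, `e = 2d`) and `a^((q-1)/(p^d+1)) = -1`,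
the defining set `D_0` is all of `F_q^*` and the code `C_{D_0}` is a
`[p^e - 1, e, (p-1)p^(e-1)]` one-weight linear code. -/
theorem stmt_5
    (p e k d m s : ℕ) [Fact p.Prime] (hp2 : p ≠ 2)
    (hk : 0 < k) (he : 0 < e)
    (hd : d = Nat.gcd k e) (heven : Even (e / d))
    (hem : e = 2 * m) (hsd : s = m / d) (hmd : m = d)
    (F : Type*) [Field F] [Fintype F] [DecidableEq F] [Algebra (ZMod p) F]
    (hcard : Fintype.card F = p ^ e)
    (a : F) (ha : a ≠ 0)
    (hcase : a ^ ((p ^ e - 1) / (p ^ d + 1)) = -1) :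
    let Tr : F → ZMod p := fun x => Algebra.trace (ZMod p) F x
    let D0 : Finset F :=
      Finset.univ.filter (fun x => x ≠ 0 ∧ Tr (a * x ^ (p ^ k + 1)) = 0)
    let wt : F → ℕ := fun b => (D0.filter (fun x => Tr (b * x) ≠ 0)).card
    -- the defining set is all of F_q^*
    (D0 = Finset.univ.filter (fun x : F => x ≠ 0))
    -- length
    ∧ D0.card = p ^ e - 1
    -- the map b ↦ c_b is injective, so the code has dimension e
    ∧ Function.Injective (fun b : F => fun x : {x : F // x ∈ D0} => Tr (b * x.1))
    -- every nonzero codeword has Hamming weight (p-1)·p^(e-1)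
    ∧ (∀ b : F, b ≠ 0 → wt b = (p - 1) * p ^ (e - 1)) := by
  intro Tr D0 wt
  have hpp : p.Prime := Fact.out
  have hp1 : 1 < p := hpp.one_lt
  subst e
  subst m
  -- d positive, d ∣ k with odd quotient
  have hd0 : 0 < d := by omega
  have hdk : d ∣ k := hd ▸ Nat.gcd_dvd_left k (2 * d)
  obtain ⟨u, hku⟩ := hdk
  have hu_odd : Odd u := by
    rcases Nat.even_or_odd u with hev | hod
    · exfalso
      obtain ⟨v, hv⟩ := hev
      have h2dvd : 2 * d ∣ k := ⟨v, by rw [hku, hv]; ring⟩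
      have h2d : 2 * d ∣ Nat.gcd k (2 * d) := Nat.dvd_gcd h2dvd dvd_rfl
      rw [← hd] at h2d
      have := Nat.le_of_dvd hd0 h2d
      omega
    · exact hod
  obtain ⟨t, hut⟩ := hu_odd
  have hkt : k = d + (2 * d) * t := by subst hku hut; ring
  -- x ^ (p ^ k) = x ^ (p ^ d)
  have hfrobk : ∀ x : F, x ^ (p ^ k) = x ^ (p ^ d) := by
    intro x
    have h1 : p ^ k = (p ^ (2 * d)) ^ t * p ^ d := by rw [hkt]; ring
    rw [h1, pow_mul]
    congr 1
    rw [← hcard]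
    exact FiniteField.pow_card_pow t x
  -- a ^ (p ^ d) = -a
  have hpd1 : 1 ≤ p ^ d := Nat.one_le_pow _ _ (by omega)
  have hexp : (p ^ (2 * d) - 1) / (p ^ d + 1) = p ^ d - 1 := by
    have h2 : p ^ (2 * d) - 1 = (p ^ d + 1) * (p ^ d - 1) := by
      have hq : p ^ (2 * d) = p ^ d * p ^ d := by rw [two_mul, pow_add]
      obtain ⟨y, hy⟩ : ∃ y, p ^ d = y + 1 := ⟨p ^ d - 1, by omega⟩
      rw [hq, hy, Nat.add_sub_cancel]
      have hr : (y + 1) * (y + 1) = (y + 1 + 1) * y + 1 := by ring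
      omega
    rw [h2, Nat.mul_div_cancel_left _ (by omega)]
  have hapd : a ^ (p ^ d) = -a := by
    have h := hcase
    rw [hexp] at h
    calc a ^ (p ^ d) = a ^ (p ^ d - 1) * a := by
          rw [← pow_succ]; congr 1; omega
      _ = -a := by rw [h]; ring
  have h2ne : (2 : ZMod p) ≠ 0 := by
    intro h
    have : ((2 : ℕ) : ZMod p) = 0 := by exact_mod_cast h
    rw [ZMod.natCast_eq_zero_iff] at this
    exact hp2 ((Nat.prime_dvd_prime_iff_eq hpp Nat.prime_two).mp this)
  -- key: Tr (a * x ^ (p^k+1)) = 0 for all x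
  have hkey : ∀ x : F, Tr (a * x ^ (p ^ k + 1)) = 0 := by
    intro x
    set y : F := a * x ^ (p ^ k + 1) with hy
    have hxcard : x ^ (p ^ (2 * d)) = x := by rw [← hcard]; exact FiniteField.pow_card x
    have hyd : y ^ (p ^ d) = -y := by
      rw [hy, mul_pow, hapd, ← pow_mul]
      have hxx : x ^ ((p ^ k + 1) * p ^ d) = x ^ (p ^ k + 1) := by
        calc x ^ ((p ^ k + 1) * p ^ d)
            = (x ^ (p ^ d)) ^ (p ^ d) * x ^ (p ^ d) := by
              rw [add_mul, one_mul, pow_add, pow_mul, hfrobk x]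
          _ = x * x ^ (p ^ d) := by
              rw [← pow_mul, show p ^ d * p ^ d = p ^ (2 * d) by rw [two_mul, pow_add], hxcard]
          _ = x ^ (p ^ k + 1) := by rw [pow_add, pow_one, hfrobk x, mul_comm]
      rw [hxx]; ring
    have h1 : Tr y = Tr (y ^ (p ^ d)) := (my_trace_frob_pow p F d y).symm
    have h2 : Tr (-y) = -Tr y := by simp only [Tr, map_neg]
    rw [hyd, h2] at h1
    have h3 : (2 : ZMod p) * Tr y = 0 := by linear_combination h1
    rcases mul_eq_zero.mp h3 with h | h
    · exact absurd h h2ne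
    · exact h
  -- the defining set is all of F_q^*
  have hD0 : D0 = Finset.univ.filter (fun x : F => x ≠ 0) := by
    ext x
    simp only [D0, Finset.mem_filter, Finset.mem_univ, true_and]
    exact ⟨fun h => h.1, fun h => ⟨h, hkey x⟩⟩
  -- nondegeneracy
  have hnd : ∀ b : F, (∀ x : F, Tr (b * x) = 0) → b = 0 := by
    intro b hb
    have hndg := traceForm_nondegenerate (ZMod p) F
    exact hndg.1 b (fun y => by simpa [Algebra.traceForm_apply] using hb y)
  refine ⟨hD0, ?_, ?_, ?_⟩
  · rw [hD0, Finset.filter_ne', Finset.card_erase_of_mem (Finset.mem_univ 0),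
      Finset.card_univ, hcard]
  · intro b1 b2 hb
    have hx : ∀ x : F, Tr ((b1 - b2) * x) = 0 := by
      intro x
      rcases eq_or_ne x 0 with rfl | hx0
      · simp [Tr]
      · have hxm : x ∈ D0 := by rw [hD0]; simp [hx0]
        have hbx := congrFun hb ⟨x, hxm⟩
        simp only at hbx
        show Algebra.trace (ZMod p) F ((b1 - b2) * x) = 0
        rw [sub_mul, map_sub]
        rw [show Algebra.trace (ZMod p) F (b1 * x) = Algebra.trace (ZMod p) F (b2 * x)
          from hbx]
        exact sub_self _
    have h0 : b1 - b2 = 0 := hnd _ hx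
    exact sub_eq_zero.mp h0
  · intro b hb
    set f : F → ZMod p := fun x => Tr (b * x) with hf
    have hfadd : ∀ x y : F, f (x - y) = f x - f y := by
      intro x y
      simp only [f, Tr, mul_sub, map_sub]
    have hfadd' : ∀ x y : F, f (x + y) = f x + f y := by
      intro x y
      simp only [f, Tr, mul_add, map_add]
    obtain ⟨z, hz⟩ : ∃ z : F, f z ≠ 0 := by
      by_contra h; push_neg at h; exact hb (hnd b h)
    have hsurj : ∀ c : ZMod p, ∃ y : F, f y = c := by
      intro c
      refine ⟨(c / f z) • z, ?_⟩
      have hs : f ((c / f z) • z) = (c / f z) * f z := by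
        simp only [f, Tr, mul_smul_comm, map_smul, smul_eq_mul]
      rw [hs, div_mul_cancel₀ _ hz]
    have hfib : ∀ c : ZMod p, (Finset.univ.filter (fun x => f x = c)).card
        = (Finset.univ.filter (fun x => f x = 0)).card := by
      intro c
      obtain ⟨y, hy⟩ := hsurj c
      apply Finset.card_bij' (fun x _ => x - y) (fun x _ => x + y)
      · intro x hx
        simp only [Finset.mem_filter, Finset.mem_univ, true_and] at hx ⊢
        rw [hfadd, hx, hy, sub_self]
      · intro x hx
        simp only [Finset.mem_filter, Finset.mem_univ, true_and] at hx ⊢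
        rw [hfadd', hx, hy, zero_add]
      · intro x _; rw [sub_add_cancel]
      · intro x _; rw [add_sub_cancel_right]
    have hsum : (Finset.univ : Finset F).card
        = ∑ c : ZMod p, (Finset.univ.filter (fun x => f x = c)).card :=
      Finset.card_eq_sum_card_fiberwise (fun x _ => Finset.mem_univ _)
    have hN : p * (Finset.univ.filter (fun x => f x = 0)).card = p ^ (2 * d) := by
      rw [← hcard, ← Finset.card_univ, hsum]
      simp_rw [hfib]
      rw [Finset.sum_const, Finset.card_univ, ZMod.card, smul_eq_mul]
    have hNval : (Finset.univ.filter (fun x => f x = 0)).card = p ^ (2 * d - 1) := by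
      have hps : p ^ (2 * d) = p * p ^ (2 * d - 1) := by
        rw [← pow_succ']
        congr 1
        omega
      rw [hps] at hN
      exact Nat.eq_of_mul_eq_mul_left (by omega) hN
    have hwt : wt b = (Finset.univ.filter (fun x => f x ≠ 0)).card := by
      show (D0.filter (fun x => Tr (b * x) ≠ 0)).card = _
      congr 1
      rw [hD0, Finset.filter_filter]
      ext x
      simp only [Finset.mem_filter, Finset.mem_univ, true_and, f]
      constructor
      · rintro ⟨_, hx⟩; exact hx
      · intro hx
        refine ⟨fun h => hx ?_, hx⟩
        rw [h, mul_zero]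
        simp [Tr]
    have hsplit : (Finset.univ.filter (fun x => f x = 0)).card
        + (Finset.univ.filter (fun x => f x ≠ 0)).card = (Finset.univ : Finset F).card :=
      Finset.card_filter_add_card_filter_not _
    rw [Finset.card_univ, hcard, hNval] at hsplit
    have hps : p ^ (2 * d) = p * p ^ (2 * d - 1) := by
      rw [← pow_succ']; congr 1; omega
    have hm : (p - 1) * p ^ (2 * d - 1) = p * p ^ (2 * d - 1) - p ^ (2 * d - 1) := by
      rw [Nat.sub_mul, one_mul]
    rw [hwt]
    omega
end
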